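/- (Huber; Lemma 1(ii)) For every ε ∈ (0,1) and every measurable set A ⊆ Ψ, the lower posterior probability over all ε-contaminations of the marginal prior satisfies Π^{lower}(A|x) = Π(A|x) / (1 + ε* r(A^c)). -/

import Mathlib

/-!
Against `Q` the contaminated posterior of `A` is
`((1-ε) ∫_A f dΠ + ε ∫_A f dQ) / ((1-ε) m + ε ∫ f dQ)`, and `∫ f dQ ≤ ∫_A f dQ + sup_{Aᶜ} f`.
Adding the same nonnegative amount `ε ∫_A f dQ` to numerator and denominator of a fraction
at most `1` only increases it, so every such posterior is at least
`(1-ε) ∫_A f dΠ / ((1-ε) m + ε sup_{Aᶜ} f)`. A point mass at `ψ ∈ Aᶜ` gives exactly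
`(1-ε) ∫_A f dΠ / ((1-ε) m + ε f ψ)`, which tends to this bound as `f ψ → sup_{Aᶜ} f`;
when `Aᶜ = ∅` the choice `Q = Π` attains it.
-/

open MeasureTheory Set

variable {Ω : Type*} [MeasurableSpace Ω]

/-- The posterior probability of a set `A` when the prior is `μ` and the likelihood
(conditional prior predictive density `ψ ↦ m(x|ψ)`) is `f`. -/
noncomputable def postProb (f : Ω → ℝ) (μ : Measure Ω) (A : Set Ω) : ℝ :=
  (∫ ψ in A, f ψ ∂μ) / (∫ ψ, f ψ ∂μ)

/-- The ε-contaminated prior `(1−ε)P + εQ`. -/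
noncomputable def contam (P Q : Measure Ω) (ε : ℝ) : Measure Ω :=
  ENNReal.ofReal (1 - ε) • P + ENNReal.ofReal ε • Q

/-- `r(A) = sup_{ψ ∈ A} f(ψ) / m` (equal to `0` when `A = ∅` since `Real.sSup ∅ = 0`). -/
noncomputable def rSup (f : Ω → ℝ) (P : Measure Ω) (A : Set Ω) : ℝ :=
  sSup (f '' A) / ∫ ψ, f ψ ∂P

/-- The upper posterior probability over all ε-contaminations. -/
noncomputable def upperPost (f : Ω → ℝ) (P : Measure Ω) (ε : ℝ) (A : Set Ω) : ℝ :=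
  ⨆ Q : ProbabilityMeasure Ω, postProb f (contam P (Q : Measure Ω) ε) A


/-- The lower posterior probability over all ε-contaminations. -/
noncomputable def lowerPost (f : Ω → ℝ) (P : Measure Ω) (ε : ℝ) (A : Set Ω) : ℝ :=
  ⨅ Q : ProbabilityMeasure Ω, postProb f (contam P (Q : Measure Ω) ε) A

lemma div_le_add_div_add {a D x : ℝ} (haD : a ≤ D) (hD : 0 < D) (hx : 0 ≤ x) :
    a / D ≤ (a + x) / (D + x) := by
  rw [div_le_div_iff₀ hD (by linarith)]
  nlinarith

section Contamination

variable {P Q : Measure Ω} {ε : ℝ}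

lemma contam_self (hε0 : 0 ≤ ε) (hε1 : ε ≤ 1) : contam P P ε = P := by
  rw [contam, ← add_smul, ← ENNReal.ofReal_add (by linarith) hε0, sub_add_cancel,
    ENNReal.ofReal_one, one_smul]

lemma integral_contam {f : Ω → ℝ} (hP : Integrable f P) (hQ : Integrable f Q)
    (hε0 : 0 ≤ ε) (hε1 : ε ≤ 1) :
    ∫ ψ, f ψ ∂(contam P Q ε) = (1 - ε) * ∫ ψ, f ψ ∂P + ε * ∫ ψ, f ψ ∂Q := by
  rw [contam, integral_add_measure (hP.smul_measure ENNReal.ofReal_ne_top)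
      (hQ.smul_measure ENNReal.ofReal_ne_top), integral_smul_measure, integral_smul_measure,
    ENNReal.toReal_ofReal (by linarith), ENNReal.toReal_ofReal hε0, smul_eq_mul, smul_eq_mul]

lemma setIntegral_contam {f : Ω → ℝ} (hP : Integrable f P) (hQ : Integrable f Q)
    (hε0 : 0 ≤ ε) (hε1 : ε ≤ 1) (A : Set Ω) :
    ∫ ψ in A, f ψ ∂(contam P Q ε) = (1 - ε) * ∫ ψ in A, f ψ ∂P + ε * ∫ ψ in A, f ψ ∂Q := by
  have : (contam P Q ε).restrict A = contam (P.restrict A) (Q.restrict A) ε := by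
    simp only [contam, Measure.restrict_add, Measure.restrict_smul]
  rw [this, integral_contam hP.restrict hQ.restrict hε0 hε1]

lemma postProb_contam {f : Ω → ℝ} (hP : Integrable f P) (hQ : Integrable f Q)
    (hε0 : 0 ≤ ε) (hε1 : ε ≤ 1) (A : Set Ω) :
    postProb f (contam P Q ε) A =
      ((1 - ε) * ∫ ψ in A, f ψ ∂P + ε * ∫ ψ in A, f ψ ∂Q) /
        ((1 - ε) * ∫ ψ, f ψ ∂P + ε * ∫ ψ, f ψ ∂Q) := by
  rw [postProb, integral_contam hP hQ hε0 hε1, setIntegral_contam hP hQ hε0 hε1]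

end Contamination

lemma sSup_image_nonneg {α : Type*} {f : α → ℝ} (hf0 : ∀ x, 0 ≤ f x) (s : Set α) :
    0 ≤ sSup (f '' s) :=
  Real.sSup_nonneg (by rintro _ ⟨x, -, rfl⟩; exact hf0 x)

lemma integral_le_setIntegral_add_sSup_compl {f : Ω → ℝ} {Q : Measure Ω} [IsProbabilityMeasure Q]
    {A : Set Ω} (hf : Integrable f Q) (hf0 : ∀ ψ, 0 ≤ f ψ) (hbdd : BddAbove (f '' Aᶜ))
    (hA : MeasurableSet A) :
    ∫ ψ, f ψ ∂Q ≤ ∫ ψ in A, f ψ ∂Q + sSup (f '' Aᶜ) := by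
  have hcompl : ∫ ψ in Aᶜ, f ψ ∂Q ≤ sSup (f '' Aᶜ) :=
    calc ∫ ψ in Aᶜ, f ψ ∂Q ≤ ∫ _ in Aᶜ, sSup (f '' Aᶜ) ∂Q :=
          setIntegral_mono_on hf.integrableOn (integrableOn_const (measure_ne_top _ _)) hA.compl
            fun ψ hψ => le_csSup hbdd ⟨ψ, hψ, rfl⟩
      _ = Q.real Aᶜ * sSup (f '' Aᶜ) := by rw [setIntegral_const, smul_eq_mul]
      _ ≤ sSup (f '' Aᶜ) := mul_le_of_le_one_left (sSup_image_nonneg hf0 Aᶜ) measureReal_le_one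
  rw [← integral_add_compl hA hf]
  linarith

section Bounds

variable {f : Ω → ℝ} {P : Measure Ω} {ε : ℝ} {A : Set Ω}

lemma div_le_postProb_contam {Q : Measure Ω} [IsProbabilityMeasure Q]
    (hP : Integrable f P) (hQ : Integrable f Q) (hf0 : ∀ ψ, 0 ≤ f ψ)
    (hbdd : BddAbove (f '' Aᶜ)) (hA : MeasurableSet A) (hm : 0 < ∫ ψ, f ψ ∂P)
    (hε0 : 0 ≤ ε) (hε1 : ε < 1) :
    (1 - ε) * (∫ ψ in A, f ψ ∂P) / ((1 - ε) * (∫ ψ, f ψ ∂P) + ε * sSup (f '' Aᶜ)) ≤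
      postProb f (contam P Q ε) A := by
  rw [postProb_contam hP hQ hε0 hε1.le]
  have hS0 := sSup_image_nonneg hf0 Aᶜ
  have ht0 : 0 ≤ ∫ ψ in A, f ψ ∂Q := setIntegral_nonneg hA fun ψ _ => hf0 ψ
  have hs0 : 0 ≤ ∫ ψ, f ψ ∂Q := integral_nonneg hf0
  have hst := integral_le_setIntegral_add_sSup_compl hQ hf0 hbdd hA
  have hIA0 : 0 ≤ ∫ ψ in A, f ψ ∂P := setIntegral_nonneg hA fun ψ _ => hf0 ψ
  have hIA : ∫ ψ in A, f ψ ∂P ≤ ∫ ψ, f ψ ∂P := setIntegral_le_integral hP (ae_of_all _ hf0)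
  have hb : 0 < (1 - ε) * ∫ ψ, f ψ ∂P := mul_pos (by linarith) hm
  calc _ ≤ ((1 - ε) * (∫ ψ in A, f ψ ∂P) + ε * ∫ ψ in A, f ψ ∂Q) /
        ((1 - ε) * (∫ ψ, f ψ ∂P) + ε * sSup (f '' Aᶜ) + ε * ∫ ψ in A, f ψ ∂Q) :=
        div_le_add_div_add (by nlinarith) (by positivity) (by positivity)
    _ ≤ _ := by
      refine div_le_div_of_nonneg_left (by nlinarith) (by positivity) ?_
      nlinarith

lemma postProb_contam_dirac (hf : Measurable f) (hP : Integrable f P) (hε0 : 0 ≤ ε)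
    (hε1 : ε ≤ 1) (hA : MeasurableSet A) {ψ : Ω} (hψ : ψ ∉ A) :
    postProb f (contam P (Measure.dirac ψ) ε) A =
      (1 - ε) * (∫ ψ in A, f ψ ∂P) / ((1 - ε) * (∫ ψ, f ψ ∂P) + ε * f ψ) := by
  classical
  rw [postProb_contam hP (integrable_dirac' hf.stronglyMeasurable enorm_lt_top) hε0 hε1,
    setIntegral_dirac' hf.stronglyMeasurable ψ hA, if_neg hψ,
    integral_dirac' f ψ hf.stronglyMeasurable, mul_zero, add_zero]

lemma lowerPost_le [IsProbabilityMeasure P] (hf : Measurable f) (hf0 : ∀ ψ, 0 ≤ f ψ)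
    (hP : Integrable f P) (hbdd : BddAbove (f '' Aᶜ)) (hA : MeasurableSet A)
    (hm : 0 < ∫ ψ, f ψ ∂P) (hε0 : 0 ≤ ε) (hε1 : ε < 1)
    (hbddBelow : BddBelow (range fun Q : ProbabilityMeasure Ω => postProb f (contam P Q ε) A)) :
    lowerPost f P ε A ≤
      (1 - ε) * (∫ ψ in A, f ψ ∂P) / ((1 - ε) * (∫ ψ, f ψ ∂P) + ε * sSup (f '' Aᶜ)) := by
  rcases (Aᶜ).eq_empty_or_nonempty with hAc | hAc
  · calc lowerPost f P ε A ≤ postProb f (contam P P ε) A := ciInf_le hbddBelow ⟨P, inferInstance⟩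
      _ = _ := by
        rw [contam_self hε0 hε1.le, hAc, image_empty, Real.sSup_empty, mul_zero, add_zero,
          postProb, mul_div_mul_left _ _ (by linarith)]
  · have hdirac : ∀ y ∈ f '' Aᶜ, lowerPost f P ε A ≤
        (1 - ε) * (∫ ψ in A, f ψ ∂P) / ((1 - ε) * (∫ ψ, f ψ ∂P) + ε * y) := by
      rintro _ ⟨ψ, hψ, rfl⟩
      rw [← postProb_contam_dirac hf hP hε0 hε1.le hA hψ]
      exact ciInf_le hbddBelow ⟨Measure.dirac ψ, inferInstance⟩
    have hD : (1 - ε) * (∫ ψ, f ψ ∂P) + ε * sSup (f '' Aᶜ) ≠ 0 := by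
      have := sSup_image_nonneg hf0 Aᶜ
      have : 0 < 1 - ε := by linarith
      positivity
    exact ContinuousWithinAt.closure_le (csSup_mem_closure (hAc.image f) hbdd)
      continuousWithinAt_const
      (ContinuousAt.continuousWithinAt (continuousAt_const.div (by fun_prop) hD)) hdirac

end Bounds

/-- Huber's Lemma 1 (ii): Π^{lower}(A|x) = Π(A|x) / (1 + ε* r(A^c)). -/
theorem lowerPost_eq
    (f : Ω → ℝ) (hf : Measurable f) (hf0 : ∀ ψ, 0 ≤ f ψ)
    (C : ℝ) (hfC : ∀ ψ, f ψ ≤ C)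
    (P : Measure Ω) [IsProbabilityMeasure P]
    (hm : 0 < ∫ ψ, f ψ ∂P)
    (ε : ℝ) (hε : ε ∈ Set.Ioo (0 : ℝ) 1)
    (A : Set Ω) (hA : MeasurableSet A) :
    lowerPost f P ε A =
      postProb f P A / (1 + (ε / (1 - ε)) * rSup f P Aᶜ) := by
  obtain ⟨hε0, hε1⟩ := hε
  have hint (μ : Measure Ω) [IsFiniteMeasure μ] : Integrable f μ :=
    .of_bound hf.aestronglyMeasurable C
      (ae_of_all _ fun ψ => (Real.norm_of_nonneg (hf0 ψ)).trans_le (hfC ψ))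
  have hbdd : BddAbove (f '' Aᶜ) := ⟨C, by rintro _ ⟨ψ, -, rfl⟩; exact hfC ψ⟩
  have hlow (Q : ProbabilityMeasure Ω) :=
    div_le_postProb_contam (Q := Q) (hint P) (hint Q) hf0 hbdd hA hm hε0.le hε1
  have hup := lowerPost_le hf hf0 (hint P) hbdd hA hm hε0.le hε1 ⟨_, forall_mem_range.2 hlow⟩
  have : Nonempty (ProbabilityMeasure Ω) := ⟨⟨P, inferInstance⟩⟩
  rw [le_antisymm hup (le_ciInf hlow), postProb, rSup]
  field_simp
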